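/- arXiv:1304.2414 — 4 statements merged into one kernel-verified Lean document; each statement's English description precedes it below -/
import Mathlib

section
/- (Abstract form of Lemma 1, first estimate.) Let u ∈ X (the exact primal solution, whose adjoint solution is z = 0), let πu ∈ V_h (an interpolant of u), let (u_h, z_h) ∈ V_h × W_h, and let c_a, ε, A, B ≥ 0 be constants. Assume: (i) Galerkin orthogonality: a_h(u − u_h, w_h) = s_a(z_h, w_h) for all w_h ∈ W_h, and a_h(v_h, z_h) = s_p(u_h − u, v_h) for all v_h ∈ V_h; (ii) continuity: |a_h(u − πu, x_h)| ≤ A · (c_a |x_h|_{S_a} + ε ‖x_h‖) for all x_h ∈ W_h; (iii) |u − πu|_{S_p} ≤ B. Then, writing ξ_h := πu − u_h, one has |ξ_h|_{S_p}² + |z_h|_{S_a}² ≤ (1 + c_a²) A² + B² + ε² ‖z_h‖², and in particular |ξ_h|_{S_p} + |z_h|_{S_a} ≤ √2 ( √(1 + c_a²) · A + B + ε ‖z_h‖ ). -/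
open scoped RealInnerProductSpace

/-- Cauchy–Schwarz for a symmetric positive semidefinite bilinear form. -/
lemma bilin_cauchy_schwarz {X : Type*} [AddCommGroup X] [Module ℝ X]
    (s : LinearMap.BilinForm ℝ X)
    (hsymm : ∀ x y : X, s x y = s y x)
    (hpos : ∀ x : X, 0 ≤ s x x) (x y : X) :
    s x y ≤ Real.sqrt (s x x) * Real.sqrt (s y y) := by
  have hquad : ∀ t : ℝ, 0 ≤ (s y y) * (t * t) + (2 * s x y) * t + s x x := by
    intro t
    have h := hpos (x + t • y)
    simp only [map_add, map_smul, LinearMap.add_apply, LinearMap.smul_apply,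
      smul_eq_mul] at h
    rw [hsymm y x] at h
    nlinarith [h]
  have hd := discrim_le_zero hquad
  have hsq : (s x y) ^ 2 ≤ s x x * s y y := by
    unfold discrim at hd
    nlinarith [hd]
  calc s x y ≤ |s x y| := le_abs_self _
    _ = Real.sqrt ((s x y) ^ 2) := (Real.sqrt_sq_eq_abs _).symm
    _ ≤ Real.sqrt (s x x * s y y) := Real.sqrt_le_sqrt hsq
    _ = Real.sqrt (s x x) * Real.sqrt (s y y) := Real.sqrt_mul (hpos x) _

set_option maxHeartbeats 1000000 in
/-- Abstract form of Lemma 1, first estimate: bound on the stabilisation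
semi-norms of the discrete errors `ξ_h := πu − u_h` and `z_h`. -/
theorem stab_seminorm_bound_first
    {X : Type*} [NormedAddCommGroup X] [InnerProductSpace ℝ X]
    (V W : Submodule ℝ X)
    (a_h s_p s_a : LinearMap.BilinForm ℝ X)
    (hsp_symm : ∀ x y : X, s_p x y = s_p y x)
    (hsa_symm : ∀ x y : X, s_a x y = s_a y x)
    (hsp_pos : ∀ x : X, 0 ≤ s_p x x)
    (hsa_pos : ∀ x : X, 0 ≤ s_a x x)
    (u : X) (πu u_h z_h : X) (hπu : πu ∈ V) (hu_h : u_h ∈ V) (hz_h : z_h ∈ W)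
    (c_a ε A B : ℝ) (hca : 0 ≤ c_a) (hε : 0 ≤ ε) (hA : 0 ≤ A) (hB : 0 ≤ B)
    (hgo1 : ∀ w_h ∈ W, a_h (u - u_h) w_h = s_a z_h w_h)
    (hgo2 : ∀ v_h ∈ V, a_h v_h z_h = s_p (u_h - u) v_h)
    (hcont : ∀ x_h ∈ W,
      |a_h (u - πu) x_h| ≤ A * (c_a * Real.sqrt (s_a x_h x_h) + ε * ‖x_h‖))
    (hinterp : Real.sqrt (s_p (u - πu) (u - πu)) ≤ B) :
    Real.sqrt (s_p (πu - u_h) (πu - u_h)) ^ 2 + Real.sqrt (s_a z_h z_h) ^ 2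
        ≤ (1 + c_a ^ 2) * A ^ 2 + B ^ 2 + ε ^ 2 * ‖z_h‖ ^ 2 ∧
      Real.sqrt (s_p (πu - u_h) (πu - u_h)) + Real.sqrt (s_a z_h z_h)
        ≤ Real.sqrt 2 * (Real.sqrt (1 + c_a ^ 2) * A + B + ε * ‖z_h‖) := by
  set ξ := πu - u_h with hξ
  set p := Real.sqrt (s_p ξ ξ) with hp
  set q := Real.sqrt (s_a z_h z_h) with hq
  have hp0 : 0 ≤ p := Real.sqrt_nonneg _
  have hq0 : 0 ≤ q := Real.sqrt_nonneg _
  have hp2 : p ^ 2 = s_p ξ ξ := Real.sq_sqrt (hsp_pos ξ)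
  have hq2 : q ^ 2 = s_a z_h z_h := Real.sq_sqrt (hsa_pos z_h)
  -- key identity
  have h1 := hgo1 z_h hz_h
  have h2 := hgo2 ξ (Submodule.sub_mem V hπu hu_h)
  have key : s_p ξ ξ + s_a z_h z_h = s_p (πu - u) ξ + a_h (u - πu) z_h := by
    simp only [hξ, map_sub, LinearMap.sub_apply] at h1 h2 ⊢
    linarith
  -- bound the two terms
  have hB1 : s_p (πu - u) ξ ≤ B * p := by
    have hcs := bilin_cauchy_schwarz s_p hsp_symm hsp_pos (πu - u) ξ
    have heq : s_p (πu - u) (πu - u) = s_p (u - πu) (u - πu) := by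
      rw [(neg_sub u πu).symm]
      simp only [map_neg, LinearMap.neg_apply, neg_neg]
    rw [heq] at hcs
    calc s_p (πu - u) ξ ≤ Real.sqrt (s_p (u - πu) (u - πu)) * p := hcs
      _ ≤ B * p := by
          exact mul_le_mul_of_nonneg_right hinterp hp0
  have hB2 : a_h (u - πu) z_h ≤ A * (c_a * q + ε * ‖z_h‖) := by
    have := hcont z_h hz_h
    calc a_h (u - πu) z_h ≤ |a_h (u - πu) z_h| := le_abs_self _
      _ ≤ A * (c_a * q + ε * ‖z_h‖) := this
  have hsum : p ^ 2 + q ^ 2 ≤ B * p + A * c_a * q + A * ε * ‖z_h‖ := by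
    rw [hp2, hq2, key]; nlinarith [hB1, hB2]
  -- first estimate via Young's inequality
  have first : p ^ 2 + q ^ 2 ≤ (1 + c_a ^ 2) * A ^ 2 + B ^ 2 + ε ^ 2 * ‖z_h‖ ^ 2 := by
    nlinarith [sq_nonneg (p - B), sq_nonneg (q - c_a * A), sq_nonneg (A - ε * ‖z_h‖),
      norm_nonneg z_h]
  refine ⟨first, ?_⟩
  -- second estimate
  have hRHS0 : (0:ℝ) ≤ (1 + c_a ^ 2) * A ^ 2 + B ^ 2 + ε ^ 2 * ‖z_h‖ ^ 2 := by positivity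
  have step1 : p + q ≤ Real.sqrt 2 * Real.sqrt (p ^ 2 + q ^ 2) := by
    have h2' : (p + q) ^ 2 ≤ 2 * (p ^ 2 + q ^ 2) := by nlinarith [sq_nonneg (p - q)]
    calc p + q = Real.sqrt ((p + q) ^ 2) := (Real.sqrt_sq (by positivity)).symm
      _ ≤ Real.sqrt (2 * (p ^ 2 + q ^ 2)) := Real.sqrt_le_sqrt h2'
      _ = Real.sqrt 2 * Real.sqrt (p ^ 2 + q ^ 2) := Real.sqrt_mul (by norm_num) _
  have step2 : Real.sqrt (p ^ 2 + q ^ 2)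
      ≤ Real.sqrt (1 + c_a ^ 2) * A + B + ε * ‖z_h‖ := by
    have hsq : p ^ 2 + q ^ 2 ≤ (Real.sqrt (1 + c_a ^ 2) * A + B + ε * ‖z_h‖) ^ 2 := by
      have h1c : Real.sqrt (1 + c_a ^ 2) ^ 2 = 1 + c_a ^ 2 :=
        Real.sq_sqrt (by positivity)
      have hs0 : 0 ≤ Real.sqrt (1 + c_a ^ 2) := Real.sqrt_nonneg _
      nlinarith [first, mul_nonneg (mul_nonneg hs0 hA) hB,
        mul_nonneg (mul_nonneg hs0 hA) (mul_nonneg hε (norm_nonneg z_h)),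
        mul_nonneg hB (mul_nonneg hε (norm_nonneg z_h))]
    calc Real.sqrt (p ^ 2 + q ^ 2)
        ≤ Real.sqrt ((Real.sqrt (1 + c_a ^ 2) * A + B + ε * ‖z_h‖) ^ 2) :=
          Real.sqrt_le_sqrt hsq
      _ = Real.sqrt (1 + c_a ^ 2) * A + B + ε * ‖z_h‖ := Real.sqrt_sq (by positivity)
  calc p + q ≤ Real.sqrt 2 * Real.sqrt (p ^ 2 + q ^ 2) := step1
    _ ≤ Real.sqrt 2 * (Real.sqrt (1 + c_a ^ 2) * A + B + ε * ‖z_h‖) :=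
        mul_le_mul_of_nonneg_left step2 (Real.sqrt_nonneg 2)
end

section
/- (Abstract form of Lemma 1, second estimate.) Let u ∈ X, πu ∈ V_h, (u_h, z_h) ∈ V_h × W_h, and c_a, ε, A, B ≥ 0. Assume: (i) Galerkin orthogonality: a_h(u − u_h, w_h) = s_a(z_h, w_h) for all w_h ∈ W_h, and a_h(v_h, z_h) = s_p(u_h − u, v_h) for all v_h ∈ V_h; (ii) continuity: |a_h(u − πu, x_h)| ≤ A · (c_a |x_h|_{S_a} + ε ‖x_h‖) for all x_h ∈ W_h; (iii) |u − πu|_{S_p} ≤ B; (iv) s_p(u, x) = 0 for every x ∈ X. Then |u_h|_{S_p} + |z_h|_{S_a} ≤ √2 ( √(1 + c_a²) · A + B + ε ‖z_h‖ ) + B. -/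
open scoped RealInnerProductSpace

lemma cs_psd {X : Type*} [NormedAddCommGroup X] [InnerProductSpace ℝ X]
    (s : LinearMap.BilinForm ℝ X) (hsymm : ∀ x y : X, s x y = s y x)
    (hpos : ∀ x : X, 0 ≤ s x x) (x y : X) :
    (s x y) ^ 2 ≤ s x x * s y y := by
  have h : ∀ t : ℝ, 0 ≤ s y y * (t * t) + (2 * s x y) * t + s x x := by
    intro t
    have := hpos (x + t • y)
    have e : s (x + t • y) (x + t • y)
        = s y y * (t * t) + (2 * s x y) * t + s x x := by
      simp only [map_add, map_smul, LinearMap.add_apply, LinearMap.smul_apply,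
        smul_eq_mul]
      rw [hsymm y x]
      ring
    linarith [e ▸ this]
  have hd := discrim_le_zero h
  unfold discrim at hd
  nlinarith [hd]

set_option maxHeartbeats 1000000 in
/-- Abstract form of Lemma 1, second estimate: bound on the stabilisation
semi-norms of `u_h` and `z_h` themselves, assuming `s_p(u, ·) ≡ 0`. -/
theorem stab_seminorm_bound_second
    {X : Type*} [NormedAddCommGroup X] [InnerProductSpace ℝ X]
    (V W : Submodule ℝ X)
    (a_h s_p s_a : LinearMap.BilinForm ℝ X)
    (hsp_symm : ∀ x y : X, s_p x y = s_p y x)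
    (hsa_symm : ∀ x y : X, s_a x y = s_a y x)
    (hsp_pos : ∀ x : X, 0 ≤ s_p x x)
    (hsa_pos : ∀ x : X, 0 ≤ s_a x x)
    (u : X) (πu u_h z_h : X) (hπu : πu ∈ V) (hu_h : u_h ∈ V) (hz_h : z_h ∈ W)
    (c_a ε A B : ℝ) (hca : 0 ≤ c_a) (hε : 0 ≤ ε) (hA : 0 ≤ A) (hB : 0 ≤ B)
    (hgo1 : ∀ w_h ∈ W, a_h (u - u_h) w_h = s_a z_h w_h)
    (hgo2 : ∀ v_h ∈ V, a_h v_h z_h = s_p (u_h - u) v_h)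
    (hcont : ∀ x_h ∈ W,
      |a_h (u - πu) x_h| ≤ A * (c_a * Real.sqrt (s_a x_h x_h) + ε * ‖x_h‖))
    (hinterp : Real.sqrt (s_p (u - πu) (u - πu)) ≤ B)
    (hspu : ∀ x : X, s_p u x = 0) :
    Real.sqrt (s_p u_h u_h) + Real.sqrt (s_a z_h z_h)
      ≤ Real.sqrt 2 * (Real.sqrt (1 + c_a ^ 2) * A + B + ε * ‖z_h‖) + B := by
  -- `s_p (u_h - u) (u_h - u) = s_p u_h u_h` since `s_p u ⬝ = 0` and symmetry
  have hee : s_p (u_h - u) (u_h - u) = s_p u_h u_h := by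
    have h1 : s_p u_h u = 0 := (hsp_symm u_h u).trans (hspu u_h)
    have h2 : s_p u (u_h - u) = 0 := hspu _
    simp only [map_sub, LinearMap.sub_apply] at *
    linarith
  set P := s_p u_h u_h with hPdef
  set Q := s_a z_h z_h with hQdef
  have hP0 : 0 ≤ P := hsp_pos u_h
  have hQ0 : 0 ≤ Q := hsa_pos z_h
  set p := Real.sqrt P with hpdef
  set q := Real.sqrt Q with hqdef
  have hp0 : 0 ≤ p := Real.sqrt_nonneg _
  have hq0 : 0 ≤ q := Real.sqrt_nonneg _
  have hp2 : p ^ 2 = P := Real.sq_sqrt hP0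
  have hq2 : q ^ 2 = Q := Real.sq_sqrt hQ0
  have hzn : 0 ≤ ‖z_h‖ := norm_nonneg _
  -- key identity
  have h1 : a_h (u_h - πu) z_h = s_p (u_h - u) (u_h - πu) :=
    hgo2 _ (Submodule.sub_mem V hu_h hπu)
  have h2 : a_h (u - u_h) z_h = Q := hgo1 z_h hz_h
  have hsplit : a_h (u - πu) z_h = a_h (u_h - πu) z_h + a_h (u - u_h) z_h := by
    have hv : u - πu = (u_h - πu) + (u - u_h) := by abel
    rw [hv, map_add, LinearMap.add_apply]
  have hsplit2 : s_p (u_h - u) (u_h - πu)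
      = s_p (u_h - u) (u_h - u) + s_p (u_h - u) (u - πu) := by
    have hv : u_h - πu = (u_h - u) + (u - πu) := by abel
    rw [hv, map_add]
  have key : P + Q = a_h (u - πu) z_h - s_p (u_h - u) (u - πu) := by
    rw [hsplit, h1, h2, hsplit2, hee]; ring
  -- bounds on the two terms
  have hC := hcont z_h hz_h
  rw [← hQdef, ← hqdef] at hC
  have hcs := cs_psd s_p hsp_symm hsp_pos (u_h - u) (u - πu)
  rw [hee] at hcs
  have hBint : s_p (u - πu) (u - πu) ≤ B ^ 2 := by
    have h0 := hsp_pos (u - πu)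
    nlinarith [Real.sq_sqrt h0, Real.sqrt_nonneg (s_p (u - πu) (u - πu)), hinterp]
  have hcs' : |s_p (u_h - u) (u - πu)| ≤ p * B := by
    have hsq : (s_p (u_h - u) (u - πu)) ^ 2 ≤ (p * B) ^ 2 := by
      calc (s_p (u_h - u) (u - πu)) ^ 2 ≤ P * s_p (u - πu) (u - πu) := hcs
        _ ≤ P * B ^ 2 := by nlinarith
        _ = (p * B) ^ 2 := by rw [mul_pow, hp2]
    have := Real.sqrt_le_sqrt hsq
    rwa [Real.sqrt_sq_eq_abs, Real.sqrt_sq (mul_nonneg hp0 hB)] at this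
  -- main quadratic inequality
  have hmain : P + Q ≤ A * (c_a * q + ε * ‖z_h‖) + p * B := by
    have habs1 : a_h (u - πu) z_h ≤ A * (c_a * q + ε * ‖z_h‖) :=
      (le_abs_self _).trans hC
    have habs2 : -(p * B) ≤ s_p (u_h - u) (u - πu) := (abs_le.mp hcs').1
    linarith
  -- algebra
  set R := Real.sqrt (1 + c_a ^ 2) with hRdef
  have hR0 : 0 ≤ R := Real.sqrt_nonneg _
  have hR2 : R ^ 2 = 1 + c_a ^ 2 := Real.sq_sqrt (by positivity)
  have hR1 : 1 ≤ R := Real.one_le_sqrt.mpr (by nlinarith [sq_nonneg c_a])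
  set T := R * A + B + ε * ‖z_h‖ with hTdef
  have hT0 : 0 ≤ T := by positivity
  have e1 : A * c_a * q ≤ (A ^ 2 * c_a ^ 2 + Q) / 2 := by
    linarith [sq_nonneg (A * c_a - q), hq2]
  have e2 : p * B ≤ (P + B ^ 2) / 2 := by linarith [sq_nonneg (p - B), hp2]
  have e3 : P + Q ≤ A ^ 2 * c_a ^ 2 + B ^ 2 + 2 * (A * ε * ‖z_h‖) := by
    linarith [e1, e2, hmain]
  have expand : T ^ 2 = R ^ 2 * A ^ 2 + B ^ 2 + ε ^ 2 * ‖z_h‖ ^ 2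
      + 2 * (R * A * B) + 2 * (R * A * (ε * ‖z_h‖)) + 2 * (B * (ε * ‖z_h‖)) := by
    rw [hTdef]; ring
  have hfin : A ^ 2 * c_a ^ 2 + B ^ 2 + 2 * (A * ε * ‖z_h‖) ≤ T ^ 2 := by
    rw [expand, hR2]
    linarith [sq_nonneg A, sq_nonneg (ε * ‖z_h‖),
      mul_nonneg (mul_nonneg hR0 hA) hB,
      mul_nonneg hB (mul_nonneg hε hzn),
      mul_nonneg (mul_nonneg (sub_nonneg.mpr hR1) hA) (mul_nonneg hε hzn)]
  have hPQT : P + Q ≤ T ^ 2 := e3.trans hfin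
  have hpq : p + q ≤ Real.sqrt 2 * T := by
    have h2 : (p + q) ^ 2 ≤ 2 * T ^ 2 := by
      linarith [sq_nonneg (p - q), hp2, hq2, hPQT]
    calc p + q = Real.sqrt ((p + q) ^ 2) := (Real.sqrt_sq (by linarith)).symm
      _ ≤ Real.sqrt (2 * T ^ 2) := Real.sqrt_le_sqrt h2
      _ = Real.sqrt 2 * T := by
          rw [Real.sqrt_mul (by norm_num), Real.sqrt_sq hT0]
  linarith
end

section
/- (Abstract form of Theorem 2, L² estimate.) For every choice of constants c_a, C₁, C₂, C₃, C₄ ≥ 0 there exist constants C > 0 and c₀ > 0, depending only on c_a, C₁, C₂, C₃, C₄, with the following property. Let k ≥ 1 be a natural number, let h > 0, ε ≥ 0, M ≥ 0, let u ∈ X, πu ∈ V_h, and (u_h, z_h) ∈ V_h × W_h. Assume: (i) Galerkin orthogonality: a_h(u − u_h, w_h) = s_a(z_h, w_h) for all w_h ∈ W_h, and a_h(v_h, z_h) = s_p(u_h − u, v_h) for all v_h ∈ V_h; (ii) there exist φ ∈ X and p ∈ W_h (a dual solution with data u − u_h and its interpolant) with a_h(u − u_h, φ) = ‖u − u_h‖²,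 a_h(u − u_h, φ − p) ≤ C₁ h ‖u − u_h‖ · ( c_a C₃ h^k M + c_a |πu − u_h|_{S_p} + ε ‖u − u_h‖ ), and |p|_{S_a} ≤ C₂ h ‖u − u_h‖; (iii) there exist ψ ∈ X and q ∈ V_h with a_h(ψ, z_h) = ‖z_h‖², a_h(ψ − q, z_h) ≤ C₁ h ‖z_h‖ · ( c_a |z_h|_{S_a} + ε ‖z_h‖ ), and |q|_{S_p} ≤ C₂ h ‖z_h‖; (iv) interpolation: |u − πu|_{S_p} ≤ C₃ h^k M; (v) stabilisation bounds: |πu − u_h|_{S_p} + |z_h|_{S_a} ≤ C₄ ( h^k M + ε ‖z_h‖ ). If h·ε ≤ c₀, then ‖u − u_h‖ + ‖z_h‖ ≤ C h^{k+1} M. -/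
/-!
Duality argument in the style of Aubin–Nitsche. Galerkin orthogonality turns
`‖u - u_h‖² = a_h(u - u_h, φ)` into `a_h(u - u_h, φ - p) + s_a(z_h, p)`; the first term is
bounded by (ii), the second by Cauchy–Schwarz for `s_a` and `|p|_{S_a} ≲ h‖u - u_h‖`.
Symmetrically `‖z_h‖² = a_h(ψ - q, z_h) + s_p(u_h - u, q)`, where `|u - u_h|_{S_p}` is split at
`πu`. Inserting the stabilisation and interpolation bounds gives `‖z_h‖ ≤ K h (h^k M + ε ‖z_h‖)` and
`‖u - u_h‖ ≤ K h (h^k M + ε (‖z_h‖ + ‖u - u_h‖))`; once `K h ε ≤ 1/4` the `ε`-terms are absorbed.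
-/

namespace LinearMap.BilinForm

variable {M : Type*} [AddCommGroup M] [Module ℝ M] {B : LinearMap.BilinForm ℝ M}

theorem abs_apply_le_sqrt_mul_sqrt (hs : ∀ x, 0 ≤ B x x) (hB : LinearMap.IsSymm B) (x y : M) :
    |B x y| ≤ √(B x x) * √(B y y) := by
  rw [← Real.sqrt_mul (hs x)]
  exact Real.abs_le_sqrt (apply_sq_le_of_symm B hs hB x y)

theorem sqrt_apply_add_le (hs : ∀ x, 0 ≤ B x x) (hB : LinearMap.IsSymm B) (x y : M) :
    √(B (x + y) (x + y)) ≤ √(B x x) + √(B y y) := by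
  rw [Real.sqrt_le_left (by positivity), add_sq, Real.sq_sqrt (hs x), Real.sq_sqrt (hs y)]
  have hxy := (abs_le.mp (abs_apply_le_sqrt_mul_sqrt hs hB x y)).2
  have hyx : B y x = B x y := (hB.eq x y).symm
  simp only [map_add, LinearMap.add_apply, hyx]
  linarith

theorem sqrt_apply_sub_le (hs : ∀ x, 0 ≤ B x x) (hB : LinearMap.IsSymm B) (x y z : M) :
    √(B (z - x) (z - x)) ≤ √(B (x - y) (x - y)) + √(B (y - z) (y - z)) := by
  rw [← neg_sub, neg_left, neg_right, neg_neg, ← sub_add_sub_cancel x y z]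
  exact sqrt_apply_add_le hs hB _ _

theorem sq_le_of_galerkin_dual (hs : ∀ x, 0 ≤ B x x) (hB : LinearMap.IsSymm B)
    {A : LinearMap.BilinForm ℝ M} {e z φ p : M} {E R α β : ℝ} (hφ : A e φ = E ^ 2)
    (hgal : A e p = B z p) (hφp : A e (φ - p) ≤ α * E * R) (hp : √(B p p) ≤ β * E) :
    E ^ 2 ≤ E * (α * R + β * √(B z z)) :=
  calc E ^ 2 = A e (φ - p) + B z p := by rw [sub_right, hφ, hgal]; ring
    _ ≤ α * E * R + √(B z z) * (β * E) := by
      gcongr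
      exact (le_abs_self _).trans
        ((abs_apply_le_sqrt_mul_sqrt hs hB z p).trans (by gcongr))
    _ = E * (α * R + β * √(B z z)) := by ring

end LinearMap.BilinForm

theorem le_of_sq_le_mul {x R : ℝ} (hx : 0 ≤ x) (hR : 0 ≤ R) (h : x ^ 2 ≤ x * R) : x ≤ R := by
  rcases hx.eq_or_lt with rfl | hx
  · exact hR
  · exact le_of_mul_le_mul_left (by rwa [← sq]) hx

theorem add_le_of_le_add_mul {E Z B δ : ℝ} (hE₀ : 0 ≤ E) (hZ₀ : 0 ≤ Z) (hδ : δ ≤ 1 / 4)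
    (hZ : Z ≤ B + δ * Z) (hE : E ≤ B + δ * (Z + E)) : E + Z ≤ 4 * B := by
  nlinarith

def l2Constant (c_a C₁ C₂ C₃ C₄ : ℝ) : ℝ := C₁ * c_a * (C₃ + C₄) + C₁ + C₂ * (C₃ + C₄) + 1

section l2Constant

variable {c_a C₁ C₂ C₃ C₄ : ℝ} {k : ℕ} {h ε M : ℝ}

theorem one_le_l2Constant (hca : 0 ≤ c_a) (hC₁ : 0 ≤ C₁) (hC₂ : 0 ≤ C₂) (hC₃ : 0 ≤ C₃)
    (hC₄ : 0 ≤ C₄) : 1 ≤ l2Constant c_a C₁ C₂ C₃ C₄ :=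
  le_add_of_nonneg_left (by positivity)

theorem dual_bound_le_l2Constant {E Z S T : ℝ} (hca : 0 ≤ c_a) (hC₁ : 0 ≤ C₁)
    (hC₂ : 0 ≤ C₂) (hC₃ : 0 ≤ C₃) (hC₄ : 0 ≤ C₄) (hh : 0 ≤ h) (hε : 0 ≤ ε) (hM : 0 ≤ M)
    (hE : 0 ≤ E) (hZ : 0 ≤ Z)
    (hS : S ≤ C₄ * (h ^ k * M + ε * Z)) (hT : T ≤ C₄ * (h ^ k * M + ε * Z)) :
    C₁ * h * (c_a * (C₃ * h ^ k * M) + c_a * S + ε * E) + C₂ * h * T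
      ≤ l2Constant c_a C₁ C₂ C₃ C₄ * (h * (h ^ k * M))
        + l2Constant c_a C₁ C₂ C₃ C₄ * (h * ε) * (Z + E) :=
  calc C₁ * h * (c_a * (C₃ * h ^ k * M) + c_a * S + ε * E) + C₂ * h * T
      ≤ C₁ * h * (c_a * (C₃ * h ^ k * M) + c_a * (C₄ * (h ^ k * M + ε * Z)) + ε * E)
        + C₂ * h * (C₄ * (h ^ k * M + ε * Z)) := by gcongr
    _ = (C₁ * c_a * (C₃ + C₄) + C₂ * C₄) * (h * (h ^ k * M))
        + ((C₁ * c_a * C₄ + C₂ * C₄) * (h * ε * Z) + C₁ * (h * ε * E)) := by ring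
    _ ≤ l2Constant c_a C₁ C₂ C₃ C₄ * (h * (h ^ k * M))
        + (l2Constant c_a C₁ C₂ C₃ C₄ * (h * ε * Z)
          + l2Constant c_a C₁ C₂ C₃ C₄ * (h * ε * E)) := by
      gcongr ?_ * _ + (?_ * _ + ?_ * _) <;> rw [← sub_nonneg] <;> unfold l2Constant <;>
        ring_nf <;> positivity
    _ = _ := by ring

theorem primal_bound_le_l2Constant {Z S T I J : ℝ} (hca : 0 ≤ c_a) (hC₁ : 0 ≤ C₁)
    (hC₂ : 0 ≤ C₂) (hC₃ : 0 ≤ C₃) (hh : 0 ≤ h) (hε : 0 ≤ ε) (hM : 0 ≤ M) (hZ : 0 ≤ Z)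
    (hS : S ≤ C₄ * (h ^ k * M + ε * Z)) (hT : T ≤ C₄ * (h ^ k * M + ε * Z))
    (hI : I ≤ C₃ * h ^ k * M) (hJ : J ≤ I + S) :
    C₁ * h * (c_a * T + ε * Z) + C₂ * h * J
      ≤ l2Constant c_a C₁ C₂ C₃ C₄ * (h * (h ^ k * M))
        + l2Constant c_a C₁ C₂ C₃ C₄ * (h * ε) * Z :=
  calc C₁ * h * (c_a * T + ε * Z) + C₂ * h * J
      ≤ C₁ * h * (c_a * (C₄ * (h ^ k * M + ε * Z)) + ε * Z)
        + C₂ * h * (C₃ * h ^ k * M + C₄ * (h ^ k * M + ε * Z)) := by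
        gcongr
        exact hJ.trans (by gcongr)
    _ = (C₁ * c_a * C₄ + C₂ * (C₃ + C₄)) * (h * (h ^ k * M))
        + (C₁ * c_a * C₄ + C₁ + C₂ * C₄) * (h * ε * Z) := by ring
    _ ≤ l2Constant c_a C₁ C₂ C₃ C₄ * (h * (h ^ k * M))
        + l2Constant c_a C₁ C₂ C₃ C₄ * (h * ε * Z) := by
      gcongr ?_ * _ + ?_ * _ <;> rw [← sub_nonneg] <;> unfold l2Constant <;> ring_nf <;>
        positivity
    _ = _ := by ring

end l2Constant

/-- Abstract form of Theorem 2, `L²` estimate: under Galerkin orthogonality,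
duality (regularity of the adjoint problem), interpolation and stabilisation
bounds, and for `h·ε` small enough, `‖u − u_h‖ + ‖z_h‖ ≤ C h^{k+1} M`. -/
theorem L2_error_estimate
    {X : Type*} [NormedAddCommGroup X] [InnerProductSpace ℝ X]
    (V W : Submodule ℝ X)
    (a_h s_p s_a : LinearMap.BilinForm ℝ X)
    (hsp_symm : ∀ x y : X, s_p x y = s_p y x)
    (hsa_symm : ∀ x y : X, s_a x y = s_a y x)
    (hsp_pos : ∀ x : X, 0 ≤ s_p x x)
    (hsa_pos : ∀ x : X, 0 ≤ s_a x x) :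
    ∀ c_a C₁ C₂ C₃ C₄ : ℝ, 0 ≤ c_a → 0 ≤ C₁ → 0 ≤ C₂ → 0 ≤ C₃ → 0 ≤ C₄ →
    ∃ C > (0 : ℝ), ∃ c₀ > (0 : ℝ),
      ∀ (k : ℕ), 1 ≤ k →
      ∀ (h ε M : ℝ), 0 < h → 0 ≤ ε → 0 ≤ M →
      ∀ (u πu u_h z_h : X), πu ∈ V → u_h ∈ V → z_h ∈ W →
      -- (i) Galerkin orthogonality
      (∀ w_h ∈ W, a_h (u - u_h) w_h = s_a z_h w_h) →
      (∀ v_h ∈ V, a_h v_h z_h = s_p (u_h - u) v_h) →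
      -- (ii) dual problem with data `u − u_h`
      (∃ φ : X, ∃ p ∈ W,
        a_h (u - u_h) φ = ‖u - u_h‖ ^ 2 ∧
        a_h (u - u_h) (φ - p)
          ≤ C₁ * h * ‖u - u_h‖ *
              (c_a * (C₃ * h ^ k * M)
                + c_a * Real.sqrt (s_p (πu - u_h) (πu - u_h))
                + ε * ‖u - u_h‖) ∧
        Real.sqrt (s_a p p) ≤ C₂ * h * ‖u - u_h‖) →
      -- (iii) primal problem with data `z_h`
      (∃ ψ : X, ∃ q ∈ V,
        a_h ψ z_h = ‖z_h‖ ^ 2 ∧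
        a_h (ψ - q) z_h
          ≤ C₁ * h * ‖z_h‖ * (c_a * Real.sqrt (s_a z_h z_h) + ε * ‖z_h‖) ∧
        Real.sqrt (s_p q q) ≤ C₂ * h * ‖z_h‖) →
      -- (iv) interpolation bound
      Real.sqrt (s_p (u - πu) (u - πu)) ≤ C₃ * h ^ k * M →
      -- (v) stabilisation bounds
      Real.sqrt (s_p (πu - u_h) (πu - u_h)) + Real.sqrt (s_a z_h z_h)
        ≤ C₄ * (h ^ k * M + ε * ‖z_h‖) →
      -- smallness of `h·ε`
      h * ε ≤ c₀ →
      ‖u - u_h‖ + ‖z_h‖ ≤ C * h ^ (k + 1) * M := by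
  intro c_a C₁ C₂ C₃ C₄ hca hC₁ hC₂ hC₃ hC₄
  have hK := one_le_l2Constant hca hC₁ hC₂ hC₃ hC₄
  set K := l2Constant c_a C₁ C₂ C₃ C₄
  refine ⟨4 * K, by positivity, (4 * K)⁻¹, by positivity, ?_⟩
  rintro k - h ε M hh hε hM u πu u_h z_h - - - hgal_dual hgal_primal ⟨φ, p, hp, hφ, hφp, hpS⟩
    ⟨ψ, q, hq, hψ, hψq, hqS⟩ hI hST hsmall
  have hsp : LinearMap.IsSymm s_p := ⟨hsp_symm⟩
  have hsa : LinearMap.IsSymm s_a := ⟨hsa_symm⟩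
  have hS := le_of_add_le_of_nonneg_left hST (Real.sqrt_nonneg _)
  have hT := le_of_add_le_of_nonneg_right hST (Real.sqrt_nonneg _)
  have hJ := LinearMap.BilinForm.sqrt_apply_sub_le hsp_pos hsp u πu u_h
  have hE : ‖u - u_h‖ ≤ K * (h * (h ^ k * M)) + K * (h * ε) * (‖z_h‖ + ‖u - u_h‖) :=
    le_of_sq_le_mul (norm_nonneg _) (by positivity) <|
      (LinearMap.BilinForm.sq_le_of_galerkin_dual hsa_pos hsa hφ (hgal_dual p hp) hφp hpS).trans <|
        mul_le_mul_of_nonneg_left (dual_bound_le_l2Constant hca hC₁ hC₂ hC₃ hC₄ hh.le hε hM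
          (norm_nonneg _) (norm_nonneg _) hS hT) (norm_nonneg _)
  have hZ : ‖z_h‖ ≤ K * (h * (h ^ k * M)) + K * (h * ε) * ‖z_h‖ :=
    le_of_sq_le_mul (norm_nonneg _) (by positivity) <|
      (LinearMap.BilinForm.sq_le_of_galerkin_dual (A := a_h.flip) hsp_pos hsp hψ
        (hgal_primal q hq) hψq hqS).trans <|
        mul_le_mul_of_nonneg_left (primal_bound_le_l2Constant hca hC₁ hC₂ hC₃ hh.le hε hM
          (norm_nonneg _) hS hT hI hJ) (norm_nonneg _)
  have hδ : K * (h * ε) ≤ 1 / 4 :=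
    calc K * (h * ε) ≤ K * (4 * K)⁻¹ := by gcongr
      _ = 1 / 4 := by field_simp
  calc ‖u - u_h‖ + ‖z_h‖ ≤ 4 * (K * (h * (h ^ k * M))) :=
        add_le_of_le_add_mul (norm_nonneg _) (norm_nonneg _) hδ hZ hE
    _ = 4 * K * h ^ (k + 1) * M := by ring
end

section
/- (Abstract form of the Corollary on optimal convergence of the stabilisation terms.) Let k ≥ 1 be a natural number, h > 0, ε, M, M' ≥ 0, let u ∈ X, πu ∈ V_h, (u_h, z_h) ∈ V_h × W_h, and let c_a, C₀, C₅ ≥ 0 be constants. Assume: (i) Galerkin orthogonality: a_h(u − u_h, w_h) = s_a(z_h, w_h) for all w_h ∈ W_h, and a_h(v_h, z_h) = s_p(u_h − u, v_h) for all v_h ∈ V_h; (ii) continuity: |a_h(u − πu, x_h)| ≤ C₀ h^k M · (c_a |x_h|_{S_a} + ε ‖x_h‖) for all x_h ∈ W_h; (iii) |u − πu|_{S_p} ≤ C₀ h^k M; (iv) ‖z_h‖ ≤ C₅ h^{k+1} M'. Then |πu − u_h|_{S_p} + |z_h|_{S_a} ≤ √2 ( √(1 + c_a²) · C₀ h^k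 M + C₀ h^k M + ε C₅ h^{k+1} M' ). -/
open scoped RealInnerProductSpace

/-- Cauchy–Schwarz for a symmetric positive semidefinite bilinear form. -/
lemma psd_cauchy_schwarz {X : Type*} [AddCommGroup X] [Module ℝ X]
    (B : LinearMap.BilinForm ℝ X) (hsymm : ∀ x y : X, B x y = B y x)
    (hpos : ∀ x : X, 0 ≤ B x x) (x y : X) :
    |B x y| ≤ Real.sqrt (B x x) * Real.sqrt (B y y) := by
  have key : B x y ^ 2 ≤ B x x * B y y := by
    have hq : ∀ t : ℝ, 0 ≤ B y y * (t * t) + (2 * B x y) * t + B x x := by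
      intro t
      have := hpos (x + t • y)
      simp only [map_add, map_smul, LinearMap.add_apply, LinearMap.smul_apply,
        smul_eq_mul] at this
      rw [hsymm y x] at this
      linarith
    have := discrim_le_zero hq
    rw [discrim] at this
    nlinarith
  calc |B x y| = Real.sqrt ((B x y) ^ 2) := by
        rw [Real.sqrt_sq_eq_abs]
    _ ≤ Real.sqrt (B x x * B y y) := Real.sqrt_le_sqrt key
    _ = Real.sqrt (B x x) * Real.sqrt (B y y) := Real.sqrt_mul (hpos x) _

set_option maxHeartbeats 1000000 in
/-- Abstract form of the Corollary on optimal convergence of the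
stabilisation terms. -/
theorem stab_terms_optimal_convergence
    {X : Type*} [NormedAddCommGroup X] [InnerProductSpace ℝ X]
    (V W : Submodule ℝ X)
    (a_h s_p s_a : LinearMap.BilinForm ℝ X)
    (hsp_symm : ∀ x y : X, s_p x y = s_p y x)
    (hsa_symm : ∀ x y : X, s_a x y = s_a y x)
    (hsp_pos : ∀ x : X, 0 ≤ s_p x x)
    (hsa_pos : ∀ x : X, 0 ≤ s_a x x)
    (k : ℕ) (hk : 1 ≤ k) (h ε M M' : ℝ)
    (hh : 0 < h) (hε : 0 ≤ ε) (hM : 0 ≤ M) (hM' : 0 ≤ M')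
    (u : X) (πu u_h z_h : X) (hπu : πu ∈ V) (hu_h : u_h ∈ V) (hz_h : z_h ∈ W)
    (c_a C₀ C₅ : ℝ) (hca : 0 ≤ c_a) (hC₀ : 0 ≤ C₀) (hC₅ : 0 ≤ C₅)
    (hgo1 : ∀ w_h ∈ W, a_h (u - u_h) w_h = s_a z_h w_h)
    (hgo2 : ∀ v_h ∈ V, a_h v_h z_h = s_p (u_h - u) v_h)
    (hcont : ∀ x_h ∈ W,
      |a_h (u - πu) x_h| ≤ C₀ * h ^ k * M * (c_a * Real.sqrt (s_a x_h x_h) + ε * ‖x_h‖))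
    (hinterp : Real.sqrt (s_p (u - πu) (u - πu)) ≤ C₀ * h ^ k * M)
    (hz : ‖z_h‖ ≤ C₅ * h ^ (k + 1) * M') :
    Real.sqrt (s_p (πu - u_h) (πu - u_h)) + Real.sqrt (s_a z_h z_h)
      ≤ Real.sqrt 2 * (Real.sqrt (1 + c_a ^ 2) * (C₀ * h ^ k * M)
          + C₀ * h ^ k * M + ε * (C₅ * h ^ (k + 1) * M')) := by
  set e := πu - u_h with he
  set A := C₀ * h ^ k * M with hA
  set B := ε * (C₅ * h ^ (k + 1) * M') with hB
  have hA0 : 0 ≤ A := by positivity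
  have hB0 : 0 ≤ B := by
    have : 0 ≤ C₅ * h ^ (k + 1) * M' := by positivity
    exact mul_nonneg hε this
  set p := Real.sqrt (s_p e e) with hp
  set q := Real.sqrt (s_a z_h z_h) with hq
  have hp0 : 0 ≤ p := Real.sqrt_nonneg _
  have hq0 : 0 ≤ q := Real.sqrt_nonneg _
  have hp2 : p ^ 2 = s_p e e := Real.sq_sqrt (hsp_pos e)
  have hq2 : q ^ 2 = s_a z_h z_h := Real.sq_sqrt (hsa_pos z_h)
  -- key energy identity
  have key : s_p e e + s_a z_h z_h = a_h (u - πu) z_h + s_p (πu - u) e := by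
    have h1 := hgo1 z_h hz_h
    have h2 := hgo2 e (Submodule.sub_mem V hπu hu_h)
    simp only [he, map_sub, LinearMap.sub_apply] at h1 h2 ⊢
    linarith [hsp_symm u_h πu, hsp_symm u_h u_h, hsp_symm u πu, hsp_symm u u_h]
  -- bounds
  have hcz := hcont z_h hz_h
  have hcs := psd_cauchy_schwarz s_p hsp_symm hsp_pos (πu - u) e
  have hpe : Real.sqrt (s_p (πu - u) (πu - u)) ≤ A := by
    have heq : s_p (πu - u) (πu - u) = s_p (u - πu) (u - πu) := by
      rw [show πu - u = -(u - πu) from (neg_sub u πu).symm]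
      simp only [map_neg, LinearMap.neg_apply, neg_neg]
    rw [heq]; exact hinterp
  have hspb : s_p (πu - u) e ≤ A * p := by
    calc s_p (πu - u) e ≤ |s_p (πu - u) e| := le_abs_self _
      _ ≤ Real.sqrt (s_p (πu - u) (πu - u)) * p := hcs
      _ ≤ A * p := by exact mul_le_mul_of_nonneg_right hpe hp0
  have hahb : a_h (u - πu) z_h ≤ A * (c_a * q) + A * B := by
    have h1 : a_h (u - πu) z_h ≤ A * (c_a * q + ε * ‖z_h‖) :=
      le_trans (le_abs_self _) hcz
    have h2 : ε * ‖z_h‖ ≤ B := by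
      rw [hB]
      exact mul_le_mul_of_nonneg_left hz hε
    nlinarith
  -- quadratic bound
  have hquad : p ^ 2 + q ^ 2 ≤ A * (c_a * q) + A * p + A * B := by
    rw [hp2, hq2]; linarith [key, hspb, hahb]
  -- Cauchy-Schwarz in ℝ²
  set s := Real.sqrt (p ^ 2 + q ^ 2) with hs
  have hs0 : 0 ≤ s := Real.sqrt_nonneg _
  have hs2 : s ^ 2 = p ^ 2 + q ^ 2 := Real.sq_sqrt (by positivity)
  have hcsR : c_a * q + p ≤ Real.sqrt (1 + c_a ^ 2) * s := by
    have hsq : (c_a * q + p) ^ 2 ≤ (1 + c_a ^ 2) * s ^ 2 := by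
      rw [hs2]; nlinarith [sq_nonneg (c_a * p - q)]
    have h1 : c_a * q + p ≤ Real.sqrt ((c_a * q + p) ^ 2) := by
      rw [Real.sqrt_sq_eq_abs]; exact le_abs_self _
    calc c_a * q + p ≤ Real.sqrt ((c_a * q + p) ^ 2) := h1
      _ ≤ Real.sqrt ((1 + c_a ^ 2) * s ^ 2) := Real.sqrt_le_sqrt hsq
      _ = Real.sqrt (1 + c_a ^ 2) * s := by
          rw [Real.sqrt_mul (by positivity), Real.sqrt_sq hs0]
  set α := Real.sqrt (1 + c_a ^ 2) with hα
  have hα1 : 1 ≤ α := by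
    rw [hα]
    nlinarith [Real.sq_sqrt (show (0:ℝ) ≤ 1 + c_a ^ 2 by positivity),
      Real.sqrt_nonneg (1 + c_a ^ 2), sq_nonneg c_a]
  have hα0 : 0 ≤ α := le_trans zero_le_one hα1
  have hs_quad : s ^ 2 ≤ A * α * s + A * B := by
    have : A * (c_a * q) + A * p = A * (c_a * q + p) := by ring
    have h1 : A * (c_a * q + p) ≤ A * (α * s) :=
      mul_le_mul_of_nonneg_left hcsR hA0
    nlinarith [hquad, hs2]
  have hAα : 0 ≤ A * α := mul_nonneg hA0 hα0
  have hfinal : s ≤ A * α + A + B := by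
    rcases le_or_gt s (A * α + A + B) with h' | h'
    · exact h'
    · exfalso
      have hs_pos : 0 < s := lt_of_le_of_lt (by positivity) h'
      have hAB : A + B ≤ s := by nlinarith
      have h2 : A * B ≤ (A + B) * s := by nlinarith
      nlinarith [mul_lt_mul_of_pos_right h' hs_pos]
  have hpq : p + q ≤ Real.sqrt 2 * s := by
    have hsq : (p + q) ^ 2 ≤ 2 * s ^ 2 := by rw [hs2]; nlinarith [sq_nonneg (p - q)]
    calc p + q ≤ Real.sqrt ((p + q) ^ 2) := by
          rw [Real.sqrt_sq_eq_abs]; exact le_abs_self _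
      _ ≤ Real.sqrt (2 * s ^ 2) := Real.sqrt_le_sqrt hsq
      _ = Real.sqrt 2 * s := by
          rw [Real.sqrt_mul (by norm_num), Real.sqrt_sq hs0]
  have h2nn : (0:ℝ) ≤ Real.sqrt 2 := Real.sqrt_nonneg 2
  calc p + q ≤ Real.sqrt 2 * s := hpq
    _ ≤ Real.sqrt 2 * (A * α + A + B) := mul_le_mul_of_nonneg_left hfinal h2nn
    _ = Real.sqrt 2 * (α * A + A + B) := by ring
end
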